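/- arXiv:2006.11261 — 4 statements merged into one kernel-verified Lean document; each statement's English description precedes it below -/
import Mathlib

section
/- For an odd prime p and ψ ∈ 𝔽_p, the constant term of (x + y + x⁻¹ + y⁻¹ + ψ)^{p-1} over 𝔽_p equals the truncation at degree p-1 of the series ₂F₁(1/2, 1/2; 1 | ψ²/16) reduced mod p, i.e., Σ_{k=0}^{⌊(p-1)/2⌋} ((1/2)_k (1/2)_k / (k!)²) · (ψ²/16)^k interpreted in 𝔽_p (each coefficient being a p-integral rational number). -/
/-!
Since `x + y + x⁻¹ + y⁻¹ = (x + y)(1 + x⁻¹y⁻¹)`, two binomial expansions show that the constant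
term of `(x + y + x⁻¹ + y⁻¹ + ψ)ⁿ` is `∑ₘ C(n, 2m) C(2m, m)² ψ^(n - 2m)`. For `p = 2s + 1` we have
`C(p - 1, 2m) ≡ 1` and, because `2s + 1 ≡ 0`, `C(2m, m) ≡ (-4)ᵐ C(s, m)` mod `p`. On the other side
`(1/2)ₖ / k! = C(2k, k) / 4ᵏ`, so the `k`-th hypergeometric coefficient is `≡ C(s, k)²`. The two
sums then agree term by term under `k ↦ s - k`, using `16ˢ = 4^(p - 1) = 1`.
-/

open Finset Nat

theorem Finset.sum_range_succ_ite_even {M : Type*} [AddCommMonoid M] (f : ℕ → M) (n : ℕ) :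
    ∑ j ∈ range (n + 1), (if Even j then f j else 0) = ∑ m ∈ range (n / 2 + 1), f (2 * m) := by
  induction n with
  | zero => simp
  | succ n ih =>
    rw [sum_range_succ, ih]
    rcases Nat.even_or_odd (n + 1) with ⟨m, hm⟩ | ⟨m, hm⟩
    · rw [if_pos ⟨m, hm⟩, show (n + 1) / 2 = n / 2 + 1 by omega, sum_range_succ _ (n / 2 + 1),
        show 2 * (n / 2 + 1) = n + 1 by omega]
    · rw [if_neg (Nat.not_even_iff_odd.mpr ⟨m, hm⟩), add_zero, show (n + 1) / 2 = n / 2 by omega]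

namespace AddMonoidAlgebra

variable {R : Type*} [CommSemiring R]

theorem single_add_single_pow {M : Type*} [AddCommMonoid M] (u v : M) (r s : R) (n : ℕ) :
    (single u r + single v s) ^ n =
      ∑ m ∈ range (n + 1), single (m • u + (n - m) • v) (r ^ m * s ^ (n - m) * n.choose m) := by
  rw [add_pow]
  refine sum_congr rfl fun m _ => ?_
  rw [single_pow, single_pow, single_mul_single, natCast_def, single_mul_single, add_zero]

theorem coeff_zero_pow_laurent_factored (j : ℕ) :
    (((single ((1 : ℤ), (0 : ℤ)) 1 + single (0, 1) 1) * (single (-1, -1) 1 + single 0 1) :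
      AddMonoidAlgebra R (ℤ × ℤ)) ^ j).coeff 0 =
      if Even j then (j.choose (j / 2) : R) ^ 2 else 0 := by
  classical
  rw [mul_pow, single_add_single_pow, single_add_single_pow, sum_mul_sum, coeff_sum,
    Finsupp.finsetSum_apply]
  simp only [single_mul_single, coeff_sum, Finsupp.finsetSum_apply, coeff_single,
    Finsupp.single_apply]
  have hcond : ∀ a ∈ range (j + 1), ∀ b : ℕ, (a • ((1 : ℤ), (0 : ℤ)) + (j - a) • (0, 1) +
      (b • (-1, -1) + (j - b) • 0) = 0 ↔ (a = b ∧ j = a + a)) := by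
    intro a ha b
    rw [mem_range] at ha
    simp only [Prod.smul_mk, Int.nsmul_eq_mul, mul_one, nsmul_zero, Prod.mk_add_mk, add_zero,
      zero_add, Int.reduceNeg, mul_neg, Prod.ext_iff, Prod.fst_zero, Prod.snd_zero]
    omega
  rw [sum_congr rfl fun a ha => sum_congr rfl fun b _ => if_congr (hcond a ha b) rfl rfl]
  simp only [ite_and, one_pow, one_mul, sum_ite_eq, sum_ite_mem, inter_self]
  rcases Nat.even_or_odd j with ⟨m, rfl⟩ | ⟨m, rfl⟩
  · have hm : ∀ x, (m + m = x + x ↔ m = x) := fun x => by omega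
    rw [if_pos ⟨m, rfl⟩, show (m + m) / 2 = m by omega]
    simp [hm, sq]
  · have hm : ∀ x, 2 * m + 1 ≠ x + x := fun x => by omega
    simp [hm]

theorem coeff_zero_pow_laurent (ψ : R) (n : ℕ) :
    ((single ((1 : ℤ), (0 : ℤ)) 1 + single (0, 1) 1 + single (-1, 0) 1 + single (0, -1) 1 +
        single (0, 0) ψ : AddMonoidAlgebra R (ℤ × ℤ)) ^ n).coeff (0, 0) =
      ∑ m ∈ range (n / 2 + 1), (n.choose (2 * m) * centralBinom m ^ 2 * ψ ^ (n - 2 * m) : R) := by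
  have hfactor : (single ((1 : ℤ), (0 : ℤ)) 1 + single (0, 1) 1 + single (-1, 0) 1 +
      single (0, -1) 1 + single (0, 0) ψ : AddMonoidAlgebra R (ℤ × ℤ)) =
      (single (1, 0) 1 + single (0, 1) 1) * (single (-1, -1) 1 + single 0 1) + single 0 ψ := by
    simp only [add_mul, mul_add, single_mul_single, mul_one, Prod.mk_add_mk, add_zero, zero_add,
      add_neg_cancel, Prod.mk_zero_zero]
    abel
  rw [hfactor, add_pow, coeff_sum, Finsupp.finsetSum_apply]
  calc _ = ∑ j ∈ range (n + 1),
        if Even j then (n.choose j * j.choose (j / 2) ^ 2 * ψ ^ (n - j) : R) else 0 := by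
        refine sum_congr rfl fun j _ => ?_
        rw [single_pow, natCast_def, mul_assoc, single_mul_single, ← Prod.zero_eq_mk,
          coeff_mul_single_apply]
        simp only [smul_zero, add_zero, neg_zero, coeff_zero_pow_laurent_factored]
        split_ifs
        · ring
        · rw [zero_mul]
    _ = _ := by
      rw [sum_range_succ_ite_even]
      simp [centralBinom_eq_two_mul_choose]

end AddMonoidAlgebra

theorem ascPochhammer_eval_half (k : ℕ) :
    (ascPochhammer ℚ k).eval (1 / 2) = centralBinom k * k ! / 4 ^ k := by
  induction k with
  | zero => simp
  | succ k ih =>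
    have h : ((k + 1 : ℕ) : ℚ) * centralBinom (k + 1) = 2 * (2 * k + 1) * centralBinom k := by
      exact_mod_cast Nat.succ_mul_centralBinom_succ k
    rw [ascPochhammer_succ_eval, ih, factorial_succ, div_mul_eq_mul_div,
      div_eq_div_iff (by positivity) (by positivity)]
    push_cast at h ⊢
    linear_combination (-(4 : ℚ) ^ k * k !) * h

theorem hypergeometric_coeff_half_half_eq (k : ℕ) :
    (ascPochhammer ℚ k).eval (1 / 2) * (ascPochhammer ℚ k).eval (1 / 2) / (k ! : ℚ) ^ 2 =
      ((centralBinom k ^ 2 : ℕ) : ℚ) / ((16 ^ k : ℕ) : ℚ) := by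
  rw [ascPochhammer_eval_half]
  have : (k ! : ℚ) ≠ 0 := by positivity
  field_simp
  push_cast
  rw [show (16 : ℚ) = 4 ^ 2 by norm_num, ← pow_mul, ← pow_mul]
  ring

theorem centralBinom_mul_factorial_eq_neg_four_pow_mul_descFactorial {R : Type*} [CommRing R]
    {s : ℕ} (hs : (2 * s + 1 : R) = 0) (k : ℕ) :
    (centralBinom k * k ! : R) = (-4) ^ k * s.descFactorial k := by
  induction k with
  | zero => simp
  | succ k ih =>
    have h : ((k + 1 : ℕ) : R) * centralBinom (k + 1) = 2 * (2 * k + 1) * centralBinom k := by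
      exact_mod_cast congrArg (Nat.cast : ℕ → R) (Nat.succ_mul_centralBinom_succ k)
    have hsub : ((s - k : ℕ) : R) * s.descFactorial k = ((s : R) - k) * s.descFactorial k := by
      rcases le_or_gt k s with hks | hks
      · rw [Nat.cast_sub hks]
      · simp [Nat.descFactorial_eq_zero_iff_lt.mpr hks]
    rw [descFactorial_succ, factorial_succ, Nat.cast_mul, Nat.cast_mul, hsub]
    push_cast at h ⊢
    linear_combination
      (k ! : R) * h + 2 * (2 * k + 1) * ih + 2 * (-4) ^ k * (s.descFactorial k : R) * hs

namespace ZMod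

variable {p s : ℕ}

theorem two_mul_add_one_eq_zero (hps : p = 2 * s + 1) : (2 * s + 1 : ZMod p) = 0 := by
  subst hps
  exact_mod_cast natCast_self _

variable [Fact p.Prime]

theorem natCast_factorial_ne_zero {k : ℕ} (hk : k < p) : (k ! : ZMod p) ≠ 0 := by
  rw [Ne, natCast_eq_zero_iff, (Fact.out : p.Prime).dvd_factorial]
  omega

theorem choose_pred_eq_neg_one_pow {k : ℕ} (hk : k < p) :
    ((p - 1).choose k : ZMod p) = (-1) ^ k := by
  have hpred : ((p - 1 : ℕ) : ZMod p) = -1 := by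
    rw [Nat.cast_sub (Fact.out : p.Prime).one_le, natCast_self, Nat.cast_one, zero_sub]
  have hdesc : (descPochhammer (ZMod p) k).eval (-1) = (k ! * (p - 1).choose k : ℕ) := by
    rw [← hpred, descPochhammer_eval_eq_descFactorial, descFactorial_eq_factorial_mul_choose]
  have h := ascPochhammer_eval_neg_eq_descPochhammer (ZMod p) (-1) k
  rw [neg_neg, ascPochhammer_eval_one, hdesc, Nat.cast_mul] at h
  apply mul_left_cancel₀ (natCast_factorial_ne_zero hk)
  have hsq : ((-1 : ZMod p) ^ k) ^ 2 = 1 := by rw [← pow_mul, pow_mul', neg_one_sq, one_pow]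
  linear_combination (-(-1 : ZMod p) ^ k) * h - (k ! : ZMod p) * ((p - 1).choose k : ZMod p) * hsq

theorem centralBinom_eq_neg_four_pow_mul_choose (hps : p = 2 * s + 1) {k : ℕ} (hk : k < p) :
    (centralBinom k : ZMod p) = (-4) ^ k * s.choose k := by
  apply mul_left_cancel₀ (natCast_factorial_ne_zero hk)
  rw [mul_comm,
    centralBinom_mul_factorial_eq_neg_four_pow_mul_descFactorial (two_mul_add_one_eq_zero hps),
    descFactorial_eq_factorial_mul_choose, Nat.cast_mul]
  ring

theorem centralBinom_sq_eq_sixteen_pow_mul_choose_sq (hps : p = 2 * s + 1) {k : ℕ} (hk : k < p) :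
    (centralBinom k : ZMod p) ^ 2 = 16 ^ k * s.choose k ^ 2 := by
  rw [centralBinom_eq_neg_four_pow_mul_choose hps hk, mul_pow, ← pow_mul, pow_mul']
  norm_num

theorem two_ne_zero_of_eq_two_mul_add_one (hps : p = 2 * s + 1) : (2 : ZMod p) ≠ 0 := fun h => by
  simpa [h] using two_mul_add_one_eq_zero hps

theorem sixteen_pow_eq_one (hps : p = 2 * s + 1) : (16 : ZMod p) ^ s = 1 := by
  have h4 : (4 : ZMod p) ≠ 0 := by
    simpa [show (4 : ZMod p) = 2 ^ 2 by norm_num] using two_ne_zero_of_eq_two_mul_add_one hps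
  rw [show (16 : ZMod p) = 4 ^ 2 by norm_num, ← pow_mul, show 2 * s = p - 1 by omega,
    pow_card_sub_one_eq_one h4]

theorem ratCast_hypergeometric_coeff_half_half (hps : p = 2 * s + 1) {k : ℕ} (hk : k < p) :
    (((ascPochhammer ℚ k).eval (1 / 2) * (ascPochhammer ℚ k).eval (1 / 2) / (k ! : ℚ) ^ 2 : ℚ) :
      ZMod p) = s.choose k ^ 2 := by
  have h16 : (16 : ZMod p) ^ k ≠ 0 := pow_ne_zero _ <| by
    simpa [show (16 : ZMod p) = 2 ^ 4 by norm_num] using two_ne_zero_of_eq_two_mul_add_one hps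
  rw [hypergeometric_coeff_half_half_eq, Rat.cast_div_of_ne_zero (by simp) (by simpa using h16),
    Rat.cast_natCast, Rat.cast_natCast]
  push_cast
  rw [centralBinom_sq_eq_sixteen_pow_mul_choose_sq hps hk]
  field_simp

end ZMod

open Finsupp Polynomial in
/-- The constant term of (x + y + x⁻¹ + y⁻¹ + ψ)^(p-1) over 𝔽_p equals the
truncation at degree p-1 of ₂F₁(1/2,1/2;1 | ψ²/16) reduced mod p. -/
theorem constant_term_eq_truncated_2F1 (p : ℕ) [Fact p.Prime] (hp : Odd p)
    (ψ : ZMod p) :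
    let f : AddMonoidAlgebra (ZMod p) (ℤ × ℤ) :=
      AddMonoidAlgebra.single ((1 : ℤ), (0 : ℤ)) 1 + AddMonoidAlgebra.single (0, 1) 1 + AddMonoidAlgebra.single (-1, 0) 1 +
        AddMonoidAlgebra.single (0, -1) 1 + AddMonoidAlgebra.single (0, 0) ψ
    (f ^ (p - 1)).coeff (0, 0) =
      ∑ k ∈ Finset.range ((p - 1) / 2 + 1),
        (((((ascPochhammer ℚ k).eval (1/2 : ℚ)) * ((ascPochhammer ℚ k).eval (1/2 : ℚ)) /
            ((k.factorial : ℚ))^2) : ℚ) : ZMod p) * (ψ ^ 2 / 16) ^ k := by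
  intro f
  obtain ⟨s, hps⟩ := hp
  rw [AddMonoidAlgebra.coeff_zero_pow_laurent, show (p - 1) / 2 = s by omega, ← sum_range_reflect]
  refine sum_congr rfl fun k hk => ?_
  have hks : k ≤ s := Nat.lt_succ_iff.mp (mem_range.mp hk)
  have h16 : (16 : ZMod p) ^ (s - k) * 16 ^ k = 1 := by
    rw [← pow_add, Nat.sub_add_cancel hks, ZMod.sixteen_pow_eq_one hps]
  rw [show s + 1 - 1 - k = s - k by omega, show p - 1 - 2 * (s - k) = 2 * k by omega,
    ZMod.choose_pred_eq_neg_one_pow (by omega),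
    ZMod.centralBinom_sq_eq_sixteen_pow_mul_choose_sq hps (by omega),
    ZMod.ratCast_hypergeometric_coeff_half_half hps (by omega), Nat.choose_symm hks,
    pow_mul, neg_one_sq, one_pow, one_mul, div_pow, ← pow_mul, mul_div_assoc',
    eq_div_iff (right_ne_zero_of_mul_eq_one h16)]
  linear_combination (s.choose k : ZMod p) ^ 2 * ψ ^ (2 * k) * h16
end

section
/- Clausen's formula in the special case a = 1/6, b = 1/3: as formal power series, ₂F₁(1/6, 1/3; 1 | z)² = ₃F₂(1/2, 1/3, 2/3; 1, 1 | z). -/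
/-!
Write `θ = X d/dX`. The series `₂F₁(a,b;c)` solves `θ(θ+c-1) f = X(θ+a)(θ+b) f`, and `₃F₂` is the
unique solution with constant term `1` of the analogous third-order equation. Differentiating the
equation of `u = ₂F₁` once more and eliminating `θ²u` and `θ³u` gives a third-order equation for
`u²`; when `c = a+b+1/2` it is exactly the equation of `₃F₂(2a,2b,a+b;2a+2b,a+b+1/2)`, and both
series have constant term `1`.
-/

open Polynomial PowerSeries
open scoped Nat

noncomputable def hypergeometric3F2Coefficient {K : Type*} [Field K] (a₁ a₂ a₃ b₁ b₂ : K)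
    (n : ℕ) : K :=
  (n !⁻¹ : K) * (ascPochhammer K n).eval a₁ * (ascPochhammer K n).eval a₂ *
    (ascPochhammer K n).eval a₃ * ((ascPochhammer K n).eval b₁)⁻¹ * ((ascPochhammer K n).eval b₂)⁻¹

section Recurrences

variable {K : Type*} [Field K] [CharZero K]

theorem ordinaryHypergeometricCoefficient_succ (a b c : K) (n : ℕ) (hc : n + c ≠ 0) :
    (n + 1) * (n + c) * ordinaryHypergeometricCoefficient a b c (n + 1) =
      (n + a) * (n + b) * ordinaryHypergeometricCoefficient a b c n := by
  simp only [ordinaryHypergeometricCoefficient, ascPochhammer_succ_eval, Nat.factorial_succ,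
    Nat.cast_mul, Nat.cast_succ, mul_inv]
  have hn : (n + 1 : K) ≠ 0 := n.cast_add_one_ne_zero
  rw [add_comm] at hc
  field_simp
  ring

theorem hypergeometric3F2Coefficient_succ (a₁ a₂ a₃ b₁ b₂ : K) (n : ℕ) (hb₁ : n + b₁ ≠ 0)
    (hb₂ : n + b₂ ≠ 0) :
    (n + 1) * (n + b₁) * (n + b₂) * hypergeometric3F2Coefficient a₁ a₂ a₃ b₁ b₂ (n + 1) =
      (n + a₁) * (n + a₂) * (n + a₃) * hypergeometric3F2Coefficient a₁ a₂ a₃ b₁ b₂ n := by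
  simp only [hypergeometric3F2Coefficient, ascPochhammer_succ_eval, Nat.factorial_succ,
    Nat.cast_mul, Nat.cast_succ, mul_inv]
  have hn : (n + 1 : K) ≠ 0 := n.cast_add_one_ne_zero
  rw [add_comm] at hb₁ hb₂
  field_simp
  ring

end Recurrences

namespace PowerSeries

variable {K : Type*} [Field K]

noncomputable def eulerOp : Derivation K K⟦X⟧ K⟦X⟧ := (X : K⟦X⟧) • d⁄dX K

local notation "θ" => eulerOp

theorem eulerOp_apply (f : K⟦X⟧) : θ f = X * d⁄dX K f := rfl

theorem coeff_eulerOp (f : K⟦X⟧) (n : ℕ) : coeff n (θ f) = n * coeff n f := by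
  cases n with
  | zero => simp [eulerOp_apply]
  | succ n => rw [eulerOp_apply, coeff_succ_X_mul, coeff_derivative]; push_cast; ring

theorem eulerOp_X_mul (f : K⟦X⟧) : θ (X * f) = X * f + X * θ f := by
  rw [Derivation.leibniz, eulerOp_apply X, derivative_X, smul_eq_mul, smul_eq_mul]
  ring

theorem eulerOp_C_mul (r : K) (f : K⟦X⟧) : θ (C r * f) = C r * θ f := by
  rw [Derivation.leibniz, ← algebraMap_eq (R := K), Derivation.map_algebraMap, smul_eq_mul,
    smul_zero, add_zero]

/-- `θ(θ + c - 1) f = X (θ + a)(θ + b) f`, the hypergeometric equation of `₂F₁(a, b; c)`. -/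
def Hypergeometric2F1Eq (a b c : K) (f : K⟦X⟧) : Prop :=
  θ (θ f) + C (c - 1) * θ f = X * (θ (θ f) + C (a + b) * θ f + C (a * b) * f)

/-- `θ(θ + b₁ - 1)(θ + b₂ - 1) f = X (θ + a₁)(θ + a₂)(θ + a₃) f`, the equation of
`₃F₂(a₁, a₂, a₃; b₁, b₂)`. -/
def Hypergeometric3F2Eq (a₁ a₂ a₃ b₁ b₂ : K) (f : K⟦X⟧) : Prop :=
  θ (θ (θ f)) + C (b₁ + b₂ - 2) * θ (θ f) + C ((b₁ - 1) * (b₂ - 1)) * θ f =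
    X * (θ (θ (θ f)) + C (a₁ + a₂ + a₃) * θ (θ f) + C (a₁ * a₂ + a₁ * a₃ + a₂ * a₃) * θ f +
      C (a₁ * a₂ * a₃) * f)

theorem hypergeometric2F1Eq_iff (a b c : K) (f : K⟦X⟧) :
    Hypergeometric2F1Eq a b c f ↔
      ∀ n : ℕ, (n + 1) * (n + c) * coeff (n + 1) f = (n + a) * (n + b) * coeff n f := by
  rw [Hypergeometric2F1Eq, PowerSeries.ext_iff, ← Nat.and_forall_add_one]
  simp only [LinearMap.map_add, coeff_C_mul, coeff_eulerOp, coeff_zero_X_mul, coeff_succ_X_mul]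
  refine (and_iff_right (by simp)).trans (forall_congr' fun n ↦ ?_)
  push_cast
  constructor <;> intro h <;> linear_combination h

theorem hypergeometric3F2Eq_iff (a₁ a₂ a₃ b₁ b₂ : K) (f : K⟦X⟧) :
    Hypergeometric3F2Eq a₁ a₂ a₃ b₁ b₂ f ↔
      ∀ n : ℕ, (n + 1) * (n + b₁) * (n + b₂) * coeff (n + 1) f =
        (n + a₁) * (n + a₂) * (n + a₃) * coeff n f := by
  rw [Hypergeometric3F2Eq, PowerSeries.ext_iff, ← Nat.and_forall_add_one]
  simp only [LinearMap.map_add, coeff_C_mul, coeff_eulerOp, coeff_zero_X_mul, coeff_succ_X_mul]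
  refine (and_iff_right (by simp)).trans (forall_congr' fun n ↦ ?_)
  push_cast
  constructor <;> intro h <;> linear_combination h

variable [CharZero K]

theorem hypergeometric2F1Eq_ordinaryHypergeometricCoefficient (a b c : K)
    (hc : ∀ n : ℕ, n + c ≠ 0) :
    Hypergeometric2F1Eq a b c (mk (ordinaryHypergeometricCoefficient a b c)) :=
  (hypergeometric2F1Eq_iff a b c _).2 fun n ↦ by
    simpa only [coeff_mk] using ordinaryHypergeometricCoefficient_succ a b c n (hc n)

theorem Hypergeometric3F2Eq.eq_mk_hypergeometric3F2Coefficient {a₁ a₂ a₃ b₁ b₂ : K} {f : K⟦X⟧}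
    (hf : Hypergeometric3F2Eq a₁ a₂ a₃ b₁ b₂ f) (hb₁ : ∀ n : ℕ, n + b₁ ≠ 0)
    (hb₂ : ∀ n : ℕ, n + b₂ ≠ 0) (h₀ : constantCoeff f = 1) :
    f = mk (hypergeometric3F2Coefficient a₁ a₂ a₃ b₁ b₂) := by
  ext n
  rw [coeff_mk]
  induction n with
  | zero => simp [h₀, hypergeometric3F2Coefficient]
  | succ n ih =>
    have hn : ((n + 1) * (n + b₁) * (n + b₂) : K) ≠ 0 :=
      mul_ne_zero (mul_ne_zero n.cast_add_one_ne_zero (hb₁ n)) (hb₂ n)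
    refine mul_left_cancel₀ hn ?_
    rw [(hypergeometric3F2Eq_iff _ _ _ _ _ f).1 hf n, ih,
      hypergeometric3F2Coefficient_succ _ _ _ _ _ n (hb₁ n) (hb₂ n)]

theorem Hypergeometric2F1Eq.sq {a b : K} {u : K⟦X⟧}
    (hu : Hypergeometric2F1Eq a b (a + b + 1 / 2) u) :
    Hypergeometric3F2Eq (2 * a) (2 * b) (a + b) (2 * a + 2 * b) (a + b + 1 / 2) (u ^ 2) := by
  have hu' := congrArg θ hu
  simp only [Derivation.map_add, eulerOp_C_mul, eulerOp_X_mul] at hu'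
  -- `linear_combination` sees `C 2⁻¹` as an atom
  have h₂ : C (2⁻¹ : K) * 2 = 1 := by
    rw [← map_ofNat C 2, ← map_mul, inv_mul_cancel₀ two_ne_zero, map_one]
  rw [Hypergeometric2F1Eq] at hu
  simp only [Hypergeometric3F2Eq, pow_two, Derivation.leibniz, smul_eq_mul, map_add]
  simp only [map_add, map_sub, map_mul, map_one, map_ofNat, one_div] at hu hu' ⊢
  linear_combination (2 * u) * hu' + (6 * θ u + 2 * (2 * C a + 2 * C b - 1) * u) * hu -
    2 * θ u ^ 2 * h₂

theorem clausen_formula (a b : K) (hc : ∀ n : ℕ, n + (a + b + 1 / 2) ≠ 0)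
    (hd : ∀ n : ℕ, n + (2 * a + 2 * b) ≠ 0) :
    mk (ordinaryHypergeometricCoefficient a b (a + b + 1 / 2)) ^ 2 =
      mk (hypergeometric3F2Coefficient (2 * a) (2 * b) (a + b) (2 * a + 2 * b) (a + b + 1 / 2)) :=
  (hypergeometric2F1Eq_ordinaryHypergeometricCoefficient a b _ hc).sq
    |>.eq_mk_hypergeometric3F2Coefficient hd hc (by simp [ordinaryHypergeometricCoefficient])

end PowerSeries

open Polynomial PowerSeries in
/-- Clausen's formula with a = 1/6, b = 1/3: as formal power series,
₂F₁(1/6,1/3;1 | z)² = ₃F₂(1/2,1/3,2/3;1,1 | z). -/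
theorem clausen_one_sixth_one_third :
    (PowerSeries.mk fun k =>
      (ascPochhammer ℚ k).eval (1/6 : ℚ) * (ascPochhammer ℚ k).eval (1/3 : ℚ) /
        ((k.factorial : ℚ) * (k.factorial : ℚ))) ^ 2 =
    (PowerSeries.mk fun k =>
      (ascPochhammer ℚ k).eval (1/2 : ℚ) * (ascPochhammer ℚ k).eval (1/3 : ℚ) *
        (ascPochhammer ℚ k).eval (2/3 : ℚ) / ((k.factorial : ℚ)) ^ 3) := by
  convert clausen_formula (1 / 6 : ℚ) (1 / 3) (fun _ ↦ by positivity) (fun _ ↦ by positivity)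
    using 2 <;> ext k <;>
    norm_num [ordinaryHypergeometricCoefficient, hypergeometric3F2Coefficient] <;> field_simp
end

section
/- For an odd prime p and ψ ∈ 𝔽_p, let f = x + y + z + x⁻¹z⁻¹ + x⁻¹y⁻¹ + ψ (the Group I vertex pencil Laurent polynomial). Then the constant term of f^{p-1} over 𝔽_p equals Σ over nonnegative integers s,t,c with 3s+3t+c = p-1 of (p-1)!/((s+t)!·t!·s!·s!·t!·c!)·ψ^c. -/
private theorem vec3_zero {α : Type*} (a0 a1 a2 : α) : ![a0,a1,a2] (0 : Fin 3) = a0 := rfl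
private theorem vec3_one {α : Type*} (a0 a1 a2 : α) : ![a0,a1,a2] (1 : Fin 3) = a1 := rfl
private theorem vec3_two {α : Type*} (a0 a1 a2 : α) : ![a0,a1,a2] (2 : Fin 3) = a2 := rfl

private theorem vec6_zero {α : Type*} (a0 a1 a2 a3 a4 a5 : α) :
    ![a0,a1,a2,a3,a4,a5] (0 : Fin 6) = a0 := rfl
private theorem vec6_one {α : Type*} (a0 a1 a2 a3 a4 a5 : α) :
    ![a0,a1,a2,a3,a4,a5] (1 : Fin 6) = a1 := rfl
private theorem vec6_two {α : Type*} (a0 a1 a2 a3 a4 a5 : α) :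
    ![a0,a1,a2,a3,a4,a5] (2 : Fin 6) = a2 := rfl
private theorem vec6_three {α : Type*} (a0 a1 a2 a3 a4 a5 : α) :
    ![a0,a1,a2,a3,a4,a5] (3 : Fin 6) = a3 := rfl
private theorem vec6_four {α : Type*} (a0 a1 a2 a3 a4 a5 : α) :
    ![a0,a1,a2,a3,a4,a5] (4 : Fin 6) = a4 := rfl
private theorem vec6_five {α : Type*} (a0 a1 a2 a3 a4 a5 : α) :
    ![a0,a1,a2,a3,a4,a5] (5 : Fin 6) = a5 := rfl

open Finsupp in
/-- The constant term of (x + y + z + x⁻¹z⁻¹ + x⁻¹y⁻¹ + ψ)^(p-1) over 𝔽_p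
(the Group I vertex pencil) equals the sum over s,t,c ≥ 0 with 3s+3t+c = p-1
of (p-1)!/((s+t)!·t!·s!·s!·t!·c!)·ψ^c. -/
theorem constant_term_group_I_pencil (p : ℕ) [Fact p.Prime] (hp : Odd p)
    (ψ : ZMod p) :
    let f : AddMonoidAlgebra (ZMod p) (Fin 3 → ℤ) :=
      AddMonoidAlgebra.single ![1,0,0] 1 + AddMonoidAlgebra.single ![0,1,0] 1 +
        AddMonoidAlgebra.single ![0,0,1] 1 +
        AddMonoidAlgebra.single ![-1,0,-1] 1 + AddMonoidAlgebra.single ![-1,-1,0] 1 +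
        AddMonoidAlgebra.single 0 ψ
    (f ^ (p - 1)).coeff 0 =
      ∑ s ∈ Finset.range p, ∑ t ∈ Finset.range p, ∑ c ∈ Finset.range p,
        if 3 * s + 3 * t + c = p - 1 then
          (((p - 1).factorial /
            ((s + t).factorial * t.factorial * s.factorial * s.factorial *
              t.factorial * c.factorial) : ℕ) : ZMod p) * ψ ^ c
        else 0 := by
  intro f
  have hp1 : 1 < p := (Fact.out : p.Prime).one_lt
  set w : Fin 6 → (Fin 3 → ℤ) := ![![1,0,0], ![0,1,0], ![0,0,1], ![-1,0,-1], ![-1,-1,0], 0]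
    with hw
  set b : Fin 6 → ZMod p := ![1,1,1,1,1,ψ] with hb
  have hf : f = ∑ i : Fin 6, AddMonoidAlgebra.single (w i) (b i) := by
    simp only [f, w, b, Fin.sum_univ_six]
    rfl
  have hterm : ∀ k : Fin 6 → ℕ,
      ((Nat.multinomial Finset.univ k : AddMonoidAlgebra (ZMod p) (Fin 3 → ℤ)) *
        ∏ i : Fin 6, AddMonoidAlgebra.single (w i) (b i) ^ k i)
      = AddMonoidAlgebra.single (∑ i : Fin 6, k i • w i)
          ((Nat.multinomial Finset.univ k : ZMod p) * ∏ i : Fin 6, b i ^ k i) := by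
    intro k
    simp_rw [AddMonoidAlgebra.single_pow, AddMonoidAlgebra.prod_single,
      AddMonoidAlgebra.natCast_def, AddMonoidAlgebra.single_mul_single, zero_add]
  rw [hf, Finset.sum_pow_eq_sum_piAntidiag]
  rw [AddMonoidAlgebra.coeff_sum, Finsupp.finset_sum_apply]
  simp_rw [hterm, AddMonoidAlgebra.coeff_single, Finsupp.single_apply]
  rw [← Finset.sum_filter]
  have hRHS : (∑ s ∈ Finset.range p, ∑ t ∈ Finset.range p, ∑ c ∈ Finset.range p,
        if 3 * s + 3 * t + c = p - 1 then
          (((p - 1).factorial /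
            ((s + t).factorial * t.factorial * s.factorial * s.factorial *
              t.factorial * c.factorial) : ℕ) : ZMod p) * ψ ^ c
        else 0)
      = ∑ x ∈ (Finset.range p ×ˢ Finset.range p ×ˢ Finset.range p).filter
          (fun x => 3 * x.1 + 3 * x.2.1 + x.2.2 = p - 1),
          (((p - 1).factorial /
            ((x.1 + x.2.1).factorial * x.2.1.factorial * x.1.factorial * x.1.factorial *
              x.2.1.factorial * x.2.2.factorial) : ℕ) : ZMod p) * ψ ^ x.2.2 := by
    rw [Finset.sum_filter, Finset.sum_product]
    simp_rw [Finset.sum_product]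
  rw [hRHS]
  -- characterize the linear condition
  have hsum6 : ∀ k : Fin 6 → ℕ, (∑ i : Fin 6, k i • w i) =
      ![(k 0 : ℤ) - k 3 - k 4, (k 1 : ℤ) - k 4, (k 2 : ℤ) - k 3] := by
    intro k
    rw [Fin.sum_univ_six]
    funext j
    simp only [Pi.add_apply, Pi.smul_apply, nsmul_eq_mul]
    fin_cases j <;>
      simp [hw, vec6_zero, vec6_one, vec6_two, vec6_three, vec6_four, vec6_five] <;> ring
  have hC : ∀ k : Fin 6 → ℕ, (∑ i : Fin 6, k i • w i) = 0 ↔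
      (k 0 = k 3 + k 4 ∧ k 1 = k 4 ∧ k 2 = k 3) := by
    intro k
    rw [hsum6]
    constructor
    · intro h
      have h0 := congrFun h 0
      have h1 := congrFun h 1
      have h2 := congrFun h 2
      simp only [vec3_zero, vec3_one, vec3_two, Pi.zero_apply] at h0 h1 h2
      omega
    · rintro ⟨h0, h1, h2⟩
      funext j
      fin_cases j <;> simp <;> omega
  refine Finset.sum_nbij' (fun k => (k 2, k 1, k 5))
    (fun x => ![x.1 + x.2.1, x.2.1, x.1, x.1, x.2.1, x.2.2]) ?_ ?_ ?_ ?_ ?_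
  · intro k hk
    simp only [Finset.mem_filter, Finset.mem_piAntidiag] at hk
    obtain ⟨⟨hsum, -⟩, hcond⟩ := hk
    rw [hC] at hcond
    rw [Fin.sum_univ_six] at hsum
    simp only [Finset.mem_filter, Finset.mem_product, Finset.mem_range]
    omega
  · intro x hx
    simp only [Finset.mem_filter, Finset.mem_product, Finset.mem_range] at hx
    rw [Finset.mem_filter, Finset.mem_piAntidiag, hC, Fin.sum_univ_six]
    simp only [vec6_zero, vec6_one, vec6_two, vec6_three, vec6_four, vec6_five]
    exact ⟨⟨by omega, fun i _ => Finset.mem_univ i⟩, by trivial, by trivial, by trivial⟩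
  · intro k hk
    simp only [Finset.mem_filter, Finset.mem_piAntidiag] at hk
    obtain ⟨-, hcond⟩ := hk
    rw [hC] at hcond
    obtain ⟨h0, h1, h2⟩ := hcond
    funext j
    fin_cases j
    · show k 2 + k 1 = k 0; omega
    · rfl
    · rfl
    · show k 2 = k 3; omega
    · show k 1 = k 4; omega
    · rfl
  · intro x hx
    rfl
  · intro k hk
    simp only [Finset.mem_filter, Finset.mem_piAntidiag] at hk
    obtain ⟨⟨hsum, -⟩, hcond⟩ := hk
    rw [hC] at hcond
    obtain ⟨h0, h1, h2⟩ := hcond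
    rw [Fin.sum_univ_six] at hsum
    have hmul : Nat.multinomial Finset.univ k =
        (p - 1).factorial /
          ((k 2 + k 1).factorial * (k 1).factorial * (k 2).factorial * (k 2).factorial *
            (k 1).factorial * (k 5).factorial) := by
      rw [Nat.multinomial]
      rw [Fin.sum_univ_six, Fin.prod_univ_six, hsum]
      congr 1
      rw [h0, h1, h2]
    have hprod : (∏ i : Fin 6, b i ^ k i) = ψ ^ k 5 := by
      simp [hb, Fin.prod_univ_six, vec6_zero, vec6_one, vec6_two, vec6_three, vec6_four,
        vec6_five]
    rw [hmul, hprod]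
end

section
/- For an odd prime p and nonzero ψ ∈ 𝔽_p, the constant term of (x₁ + x₂ + x₃ + x₁⁻¹x₂⁻¹x₃⁻¹ + ψ)^{p-1} over 𝔽_p equals Σ_{k=0}^{⌊(p-1)/4⌋} (p-1)!/((k!)⁴ (p-1-4k)!) · ψ^{p-1-4k} in 𝔽_p. -/
open Finsupp in
/-- The constant term of (x₁ + x₂ + x₃ + x₁⁻¹x₂⁻¹x₃⁻¹ + ψ)^(p-1) over 𝔽_p equals
Σ_{k=0}^{⌊(p-1)/4⌋} (p-1)!/((k!)⁴ (p-1-4k)!) · ψ^{p-1-4k}. -/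
theorem constant_term_fermat_quartic_trunc (p : ℕ) [Fact p.Prime] (hp : Odd p)
    (ψ : ZMod p) (hψ : ψ ≠ 0) :
    let f : AddMonoidAlgebra (ZMod p) (Fin 3 → ℤ) :=
      AddMonoidAlgebra.single ![1,0,0] 1 + AddMonoidAlgebra.single ![0,1,0] 1 +
        AddMonoidAlgebra.single ![0,0,1] 1 +
        AddMonoidAlgebra.single ![-1,-1,-1] 1 + AddMonoidAlgebra.single 0 ψ
    (f ^ (p - 1)).coeff 0 =
      ∑ k ∈ Finset.range ((p - 1) / 4 + 1),
        (((p - 1).factorial / (k.factorial ^ 4 * (p - 1 - 4 * k).factorial) : ℕ) :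
          ZMod p) * ψ ^ (p - 1 - 4 * k) := by
  intro f
  classical
  set n := p - 1 with hn
  set v : Fin 5 → (Fin 3 → ℤ) := ![![1,0,0],![0,1,0],![0,0,1],![-1,-1,-1],0] with hv
  set c : Fin 5 → ZMod p := ![1,1,1,1,ψ] with hc
  have hf : f = ∑ i : Fin 5, AddMonoidAlgebra.single (v i) (c i) := by
    simp [Fin.sum_univ_five, hv, hc, f]
  rw [hf, Finset.sum_pow_eq_sum_piAntidiag]
  have hterm : ∀ k : Fin 5 → ℕ,
      ((Nat.multinomial Finset.univ k : AddMonoidAlgebra (ZMod p) (Fin 3 → ℤ)) *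
        ∏ i, AddMonoidAlgebra.single (v i) (c i) ^ k i).coeff 0
      = if (∑ i, k i • v i) = 0 then
          (Nat.multinomial Finset.univ k : ZMod p) * ∏ i, c i ^ k i else 0 := by
    intro k
    have : ∏ i, AddMonoidAlgebra.single (v i) (c i) ^ k i
        = AddMonoidAlgebra.single (∑ i, k i • v i) (∏ i, c i ^ k i) := by
      simp_rw [AddMonoidAlgebra.single_pow]
      exact AddMonoidAlgebra.prod_single Finset.univ (fun i => k i • v i) (fun i => c i ^ k i)
    rw [this, ← nsmul_eq_mul, AddMonoidAlgebra.coeff_smul, Finsupp.smul_apply, AddMonoidAlgebra.coeff_single, Finsupp.single_apply]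
    simp only [smul_ite, smul_zero, nsmul_eq_mul]
  rw [AddMonoidAlgebra.coeff_sum, Finsupp.finset_sum_apply]
  simp_rw [hterm]
  rw [← Finset.sum_filter]
  -- characterize the filtered set
  refine Finset.sum_nbij' (fun k => k 0)
      (fun m => ![m, m, m, m, n - 4 * m]) ?_ ?_ ?_ ?_ ?_
  · -- i maps into range
    intro k hk
    simp only [Finset.mem_filter, Finset.mem_piAntidiag] at hk
    obtain ⟨⟨hsum, -⟩, hzero⟩ := hk
    have h0 := congrFun hzero 0
    have h1 := congrFun hzero 1
    have h2 := congrFun hzero 2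
    simp [Fin.sum_univ_five, hv, Pi.smul_apply] at h0 h1 h2 ⊢
    rw [Fin.sum_univ_five] at hsum
    omega
  · -- j maps into filter
    intro m hm
    simp only [Finset.mem_range] at hm
    have h4 : 4 * m ≤ n := by omega
    simp only [Finset.mem_filter, Finset.mem_piAntidiag]
    refine ⟨⟨?_, fun i _ => Finset.mem_univ i⟩, ?_⟩
    · rw [Fin.sum_univ_five]; simp; omega
    · funext j
      fin_cases j <;>
        simp [Fin.sum_univ_five, hv, Pi.smul_apply]
  · -- left inverse
    intro k hk
    simp only [Finset.mem_filter, Finset.mem_piAntidiag] at hk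
    obtain ⟨⟨hsum, -⟩, hzero⟩ := hk
    have h0 := congrFun hzero 0
    have h1 := congrFun hzero 1
    have h2 := congrFun hzero 2
    simp [Fin.sum_univ_five, hv, Pi.smul_apply] at h0 h1 h2
    rw [Fin.sum_univ_five] at hsum
    funext j
    fin_cases j <;> simp <;> omega
  · -- right inverse
    intro m hm
    simp
  · -- values agree
    intro k hk
    simp only [Finset.mem_filter, Finset.mem_piAntidiag] at hk
    obtain ⟨⟨hsum, -⟩, hzero⟩ := hk
    have h0 := congrFun hzero 0
    have h1 := congrFun hzero 1
    have h2 := congrFun hzero 2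
    simp [Fin.sum_univ_five, hv, Pi.smul_apply] at h0 h1 h2
    rw [Fin.sum_univ_five] at hsum
    have hk1 : k 1 = k 0 := by omega
    have hk2 : k 2 = k 0 := by omega
    have hk3 : k 3 = k 0 := by omega
    have hk4 : k 4 = n - 4 * k 0 := by omega
    have hmult : Nat.multinomial Finset.univ k
        = n.factorial / ((k 0).factorial ^ 4 * (n - 4 * (k 0)).factorial) := by
      rw [Nat.multinomial]
      rw [Fin.sum_univ_five, Fin.prod_univ_five, hk1, hk2, hk3, hk4]
      congr 1
      · congr 1; omega
      · ring
    rw [hmult, Fin.prod_univ_five, hk1, hk2, hk3, hk4]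
    simp [hc]
end
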